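/- arXiv:2305.01927 — 2 statements merged into one kernel-verified Lean document; each statement's English description precedes it below -/
import Mathlib

section
/- Every finite split graph G satisfies χ₁(G) ≤ ⌈(χ(G) − 1)/3⌉ + 1. -/
open SimpleGraph

/-- A 1-selection on `G`: each vertex `v` selects (at most) one pair containing `v`;
deleting the selected pairs from the edge set removes at most one edge incident
to each vertex.  (Selecting a non-edge, e.g. the diagonal, deletes nothing at `v`.) -/
def IsOneSelection {V : Type*} (G : SimpleGraph V) (f : V → Sym2 V) : Prop :=
  ∀ v : V, v ∈ f v

/-- The 1-removed graph `G_f`. -/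
def oneRemoved {V : Type*} (G : SimpleGraph V) (f : V → Sym2 V) : SimpleGraph V :=
  G.deleteEdges (Set.range f)

/-- The chromatic number of `G` as a natural number. -/
noncomputable def chromNum {V : Type*} (G : SimpleGraph V) : ℕ :=
  sInf {n : ℕ | G.Colorable n}

/-- The robust chromatic number `χ₁(G)`: the minimum of `χ(G_f)` over all 1-selections. -/
noncomputable def robustChromNum {V : Type*} (G : SimpleGraph V) : ℕ :=
  sInf {m : ℕ | ∃ f : V → Sym2 V, IsOneSelection G f ∧ chromNum (oneRemoved G f) = m}

/-- The robust clique number `ω₁(G)`: the minimum of `ω(G_f)` over all 1-selections. -/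
noncomputable def robustCliqueNum {V : Type*} (G : SimpleGraph V) : ℕ :=
  sInf {m : ℕ | ∃ f : V → Sym2 V, IsOneSelection G f ∧ (oneRemoved G f).cliqueNum = m}

/-- A set of vertices is independent if no two of its elements are adjacent. -/
def IsIndepVxSet {V : Type*} (G : SimpleGraph V) (s : Set V) : Prop :=
  s.Pairwise fun a b => ¬ G.Adj a b

/-- The independence number of `G`. -/
noncomputable def indepNum {V : Type*} (G : SimpleGraph V) : ℕ :=
  sSup {n : ℕ | ∃ s : Finset V, IsIndepVxSet G ↑s ∧ s.card = n}

/-- The robust independence number `α₁(G)`: the maximum of `α(G_f)` over all 1-selections. -/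
noncomputable def robustIndepNum {V : Type*} (G : SimpleGraph V) : ℕ :=
  sSup {m : ℕ | ∃ f : V → Sym2 V, IsOneSelection G f ∧ _root_.indepNum (oneRemoved G f) = m}

/-- `U` is robust independent in `G` if some 1-selection makes it independent. -/
def IsRobustIndep {V : Type*} (G : SimpleGraph V) (U : Set V) : Prop :=
  ∃ f : V → Sym2 V, IsOneSelection G f ∧ IsIndepVxSet (oneRemoved G f) U

/-- Threshold graph. -/
def IsThresholdGraph {V : Type*} (G : SimpleGraph V) : Prop :=
  ∃ (h : ℝ) (g : V → ℝ), ∀ x y : V, x ≠ y → (G.Adj x y ↔ g x + g y > h)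

/-- `G` is ω-unique: it has exactly one clique of order `ω(G)`. -/
def IsOmegaUnique {V : Type*} (G : SimpleGraph V) : Prop :=
  ∃! s : Finset V, G.IsNClique G.cliqueNum s

/-- Split graph: vertex set partitions into a clique and an independent set. -/
def IsSplitGraph {V : Type*} (G : SimpleGraph V) : Prop :=
  ∃ A : Set V, G.IsClique A ∧ IsIndepVxSet G Aᶜ

/-- Chordal graph: no induced cycle of length greater than 3. -/
def IsChordalGraph {V : Type*} (G : SimpleGraph V) : Prop :=
  ∀ n : ℕ, 4 ≤ n → ¬ ∃ φ : Fin n ↪ V,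
    ∀ i j : Fin n, G.Adj (φ i) (φ j) ↔ (SimpleGraph.cycleGraph n).Adj i j

/-- Interval graph: vertices can be assigned nonempty closed real intervals so that
two distinct vertices are adjacent iff their intervals intersect. -/
def IsIntervalGraph {V : Type*} (G : SimpleGraph V) : Prop :=
  ∃ a b : V → ℝ, (∀ v, a v ≤ b v) ∧
    ∀ u v : V, u ≠ v →
      (G.Adj u v ↔ (Set.Icc (a u) (b u) ∩ Set.Icc (a v) (b v)).Nonempty)

/-- Unit interval graph: vertices can be labelled by reals so that two distinct
vertices are adjacent iff their labels are at distance less than 1. -/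
def IsUnitIntervalGraph {V : Type*} (G : SimpleGraph V) : Prop :=
  ∃ r : V → ℝ, ∀ u v : V, u ≠ v → (G.Adj u v ↔ |r u - r v| < 1)

/-- Quasi-unicyclic: every connected component contains at most one cycle,
i.e. any two cycles lying in the same component have the same edge set. -/
def QuasiUnicyclic {V : Type*} [DecidableEq V] (G : SimpleGraph V) : Prop :=
  ∀ (u v : V) (p : G.Walk u u) (q : G.Walk v v),
    p.IsCycle → q.IsCycle → G.Reachable u v →
      p.edges.toFinset = q.edges.toFinset

/-- The Kneser graph `KG(n,k)`. -/
def kneserGraph (n k : ℕ) : SimpleGraph {s : Finset (Fin n) // s.card = k} where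
  Adj a b := a ≠ b ∧ Disjoint a.1 b.1
  symm := by
    constructor
    intro a b hab
    exact ⟨hab.1.symm, hab.2.symm⟩
  loopless := by
    constructor
    intro a ha
    exact ha.1 rfl

/-!
Let `A` be the clique of the split graph and `a ∈ A`. Every vertex outside `A` selects its
edge to `a`, so `Aᶜ ∪ {a}` becomes independent; the other `|A| - 1` clique vertices are cut
into groups of at most three, and each group becomes independent once its vertices select the
edges of the group's triangle cyclically. This colours some `G_f` with `⌈(|A| - 1)/3⌉ + 1`
colours, and `|A| ≤ χ(G)` because `A` is a clique.
-/

open Finset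

lemma Finset.exists_card_filter_eq_le {α : Type*} (S : Finset α) {d : ℕ} (hd : 0 < d) :
    ∃ c : α → ℕ, (∀ v ∈ S, c v < (#S + d - 1) / d) ∧ ∀ j, #{v ∈ S | c v = j} ≤ d := by
  classical
  let e : α → ℕ := fun v => if h : v ∈ S then S.equivFin ⟨v, h⟩ else 0
  have he_lt : ∀ v ∈ S, e v < #S := fun v hv => by simp [e, hv]
  have he_inj : Set.InjOn e S := fun u hu v hv h => by
    simp only [e, dif_pos (mem_coe.1 hu), dif_pos (mem_coe.1 hv), Fin.val_inj,
      EmbeddingLike.apply_eq_iff_eq, Subtype.mk.injEq] at h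
    exact h
  refine ⟨fun v => e v / d, fun v hv => ?_, fun j => ?_⟩
  · calc e v / d < e v / d + 1 := Nat.lt_succ_self _
      _ = (e v + d) / d := (Nat.add_div_right _ hd).symm
      _ ≤ (#S + d - 1) / d := Nat.div_le_div_right (by have := he_lt v hv; omega)
  · calc #{v ∈ S | e v / d = j} ≤ #(Ico (j * d) (j * d + d)) := by
          refine card_le_card_of_injOn e (fun v hv => ?_)
            (he_inj.mono (coe_subset.2 (filter_subset _ S)))
          simp only [coe_filter, Set.mem_ofPred_eq] at hv
          have hlo := (Nat.le_div_iff_mul_le hd).1 hv.2.ge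
          have hhi := (Nat.div_lt_iff_lt_mul hd).1 (by omega : e v / d < j + 1)
          simp only [coe_Ico, Set.mem_Ico]
          constructor <;> linarith
      _ = d := by simp

section RobustIndep

variable {V : Type*} {G : SimpleGraph V}

lemma SimpleGraph.Colorable.chromNum_le {n : ℕ} (h : G.Colorable n) : chromNum G ≤ n :=
  Nat.sInf_le h

lemma SimpleGraph.colorable_chromNum [Fintype V] : G.Colorable (chromNum G) :=
  Nat.sInf_mem (s := {n | G.Colorable n}) ⟨_, G.colorable_of_fintype⟩

lemma IsOneSelection.robustChromNum_le {f : V → Sym2 V} (hf : IsOneSelection G f) :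
    robustChromNum G ≤ chromNum (oneRemoved G f) :=
  Nat.sInf_le ⟨f, hf, rfl⟩

lemma isIndepVxSet_oneRemoved_iff {f : V → Sym2 V} {s : Set V} :
    IsIndepVxSet (oneRemoved G f) s ↔
      s.Pairwise fun u v => G.Adj u v → s(u, v) ∈ Set.range f := by
  simp only [IsIndepVxSet, oneRemoved, deleteEdges_adj, not_and, not_not]

lemma IsRobustIndep.mono {s t : Set V} (ht : IsRobustIndep G t) (hst : s ⊆ t) :
    IsRobustIndep G s :=
  let ⟨f, hf, hind⟩ := ht
  ⟨f, hf, hind.mono hst⟩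

lemma IsIndepVxSet.isRobustIndep {s : Set V} (hs : IsIndepVxSet G s) : IsRobustIndep G s :=
  ⟨fun v => s(v, v), fun v => Sym2.mem_mk_left v v,
    hs.mono' fun _ _ h hadj => h (deleteEdges_le _ hadj)⟩

lemma IsIndepVxSet.isRobustIndep_insert {s : Set V} (hs : IsIndepVxSet G s) (a : V) :
    IsRobustIndep G (insert a s) := by
  refine ⟨fun v => s(v, a), fun v => Sym2.mem_mk_left v a, isIndepVxSet_oneRemoved_iff.2 ?_⟩
  rintro u (rfl | hu) v (rfl | hv) huv hadj
  · exact absurd rfl huv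
  · exact ⟨v, Sym2.eq_swap⟩
  · exact ⟨u, rfl⟩
  · exact absurd hadj (hs hu hv huv)

lemma IsIndepVxSet.isRobustIndep_union_of_subsingleton {s t : Set V} (hs : IsIndepVxSet G s)
    (ht : t.Subsingleton) : IsRobustIndep G (s ∪ t) := by
  rcases ht.eq_empty_or_singleton with rfl | ⟨a, rfl⟩
  · simpa using hs.isRobustIndep
  · simpa [Set.union_singleton] using hs.isRobustIndep_insert a

lemma isRobustIndep_triple (a b c : V) : IsRobustIndep G {a, b, c} := by
  classical
  set f : V → Sym2 V := fun v => if v = a then s(a, b) else if v = b then s(b, c) else s(v, a)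
  refine ⟨f, fun v => ?_, isIndepVxSet_oneRemoved_iff.2 ?_⟩
  · simp only [f]
    split_ifs <;> simp_all
  · rintro u hu v hv huv -
    suffices f u = s(u, v) ∨ f v = s(u, v) by
      rcases this with h | h
      exacts [⟨u, h⟩, ⟨v, h⟩]
    simp only [Set.mem_insert_iff, Set.mem_singleton_iff] at hu hv
    rcases hu with rfl | rfl | rfl <;> rcases hv with rfl | rfl | rfl <;>
      simp only [f] <;> split_ifs <;> simp_all [Sym2.eq_swap]

lemma isRobustIndep_of_card_le_three (s : Finset V) (hs : #s ≤ 3) : IsRobustIndep G s := by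
  classical
  obtain h | h | h | h : #s = 0 ∨ #s = 1 ∨ #s = 2 ∨ #s = 3 := by omega
  · simp only [card_eq_zero.1 h, coe_empty]
    exact IsIndepVxSet.isRobustIndep (Set.pairwise_empty _)
  · obtain ⟨a, rfl⟩ := card_eq_one.1 h
    exact (isRobustIndep_triple a a a).mono (by simp)
  · obtain ⟨a, b, -, rfl⟩ := card_eq_two.1 h
    exact (isRobustIndep_triple a b b).mono (by simp)
  · obtain ⟨a, b, c, -, -, -, rfl⟩ := card_eq_three.1 h
    exact (isRobustIndep_triple a b c).mono (by simp)

lemma robustChromNum_le_of_isRobustIndep_fibers {n : ℕ} (c : V → ℕ) (hc : ∀ v, c v < n)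
    (h : ∀ i, IsRobustIndep G (c ⁻¹' {i})) : robustChromNum G ≤ n := by
  choose f hf hind using h
  let g : V → Sym2 V := fun v => f (c v) v
  have hcol : (oneRemoved G g).Colorable n := by
    refine (colorable_iff_exists_bdd_nat_coloring n).2
      ⟨Coloring.mk c fun {u v} huv hcuv => ?_, hc⟩
    rw [oneRemoved, deleteEdges_adj] at huv
    obtain ⟨w, hw⟩ := isIndepVxSet_oneRemoved_iff.1 (hind (c u)) rfl hcuv.symm huv.1.ne huv.1
    -- `w` selected the edge `uv`, so `w ∈ {u, v}` lies in the class of `u` and `g w = f (c u) w`.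
    have hcw : c w = c u := by
      rcases Sym2.mem_iff.1 (hw ▸ hf (c u) w) with rfl | rfl
      exacts [rfl, hcuv.symm]
    exact huv.2 ⟨w, by simp only [g, hcw, hw]⟩
  exact (IsOneSelection.robustChromNum_le fun v => hf _ v).trans hcol.chromNum_le

lemma robustChromNum_le_of_isIndepVxSet_compl (A : Finset V) (hA : IsIndepVxSet G (↑A)ᶜ) :
    robustChromNum G ≤ (#A - 1 + 2) / 3 + 1 := by
  classical
  obtain ⟨S, hSA, hS⟩ := A.exists_subset_card_eq (Nat.sub_le #A 1)
  obtain ⟨c, hc_lt, hc_card⟩ := S.exists_card_filter_eq_le (d := 3) (by norm_num)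
  refine robustChromNum_le_of_isRobustIndep_fibers (fun v => if v ∈ S then c v + 1 else 0)
    (fun v => ?_) ?_
  · split_ifs with hv
    · have := hc_lt v hv
      omega
    · omega
  rintro (_ | j)
  · have hAS : (↑(A \ S) : Set V).Subsingleton :=
      card_le_one_iff_subsingleton.1 (by rw [card_sdiff_of_subset hSA]; omega)
    refine (hA.isRobustIndep_union_of_subsingleton hAS).mono fun v hv => ?_
    simp only [Set.mem_preimage, Set.mem_singleton_iff, ite_eq_right_iff] at hv
    simp only [Set.mem_union, Set.mem_compl_iff, mem_coe, coe_sdiff, Set.mem_sdiff]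
    tauto
  · refine (isRobustIndep_of_card_le_three _ (hc_card j)).mono fun v hv => ?_
    simp only [Set.mem_preimage, Set.mem_singleton_iff] at hv
    split_ifs at hv with hvS
    · simp [hvS, Nat.succ_injective hv]

end RobustIndep

theorem robustChromNum_le_of_splitGraph_general
    {V : Type} [Fintype V] (G : SimpleGraph V)
    (hsplit : IsSplitGraph G) :
    robustChromNum G ≤ (chromNum G - 1 + 2) / 3 + 1 := by
  classical
  obtain ⟨A, hA, hAc⟩ := hsplit
  have hA_le : #A.toFinset ≤ chromNum G :=
    IsClique.card_le_of_colorable (by simpa using hA) G.colorable_chromNum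
  have hrobust := robustChromNum_le_of_isIndepVxSet_compl A.toFinset (by simpa using hAc)
  omega

/-- Every finite split graph `G` satisfies `χ₁(G) ≤ ⌈(χ(G) - 1)/3⌉ + 1`. -/
theorem robustChromNum_le_of_splitGraph
    {V : Type} [Fintype V] [DecidableEq V] (G : SimpleGraph V)
    (hsplit : IsSplitGraph G) :
    robustChromNum G ≤ (chromNum G - 1 + 2) / 3 + 1 :=
  robustChromNum_le_of_splitGraph_general G hsplit
end

section
/- Let 1 ≤ n_1 ≤ n_2 ≤ … ≤ n_t be integers with t ≥ 1 and n_1 < t, and let j be the largest integer such that n_1 + n_2 + … + n_j ≤ t − j. Then χ₁(K_{n_1,…,n_t}) ≤ t − j. -/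
open SimpleGraph

/-!
The vertices of the first `j` classes number at most `t - j`, so listing the classes one after
another sends them injectively to the remaining `t - j` classes. If a vertex `u` is sent to the
class `c`, let every vertex of `c` select its edge to `u`; then `u` may take the colour of `c`,
and giving each of the last `t - j` classes its own colour properly colours `G_f`.
-/

theorem robustChromNum_le_of_colorable {V : Type*} {G : SimpleGraph V} {f : V → Sym2 V}
    (hf : IsOneSelection G f) {k : ℕ} (hk : (oneRemoved G f).Colorable k) :
    robustChromNum G ≤ k :=
  calc robustChromNum G ≤ chromNum (oneRemoved G f) := Nat.sInf_le ⟨f, hf, rfl⟩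
    _ ≤ k := Nat.sInf_le hk

namespace CompleteMultipartite

variable {ι : Type*} {V : ι → Type*} {s : Set ι}
  (φ : {v : (i : ι) × V i // v.1 ∈ s} ↪ ↥sᶜ)

open Classical in
/-- Each vertex `w` selects its edge to the vertex `u` with `φ u = w.1`, if any, so that `u`
loses all its edges into the class `φ u`. -/
noncomputable def absorbingSelection (w : (i : ι) × V i) : Sym2 ((i : ι) × V i) :=
  if h : ∃ u, (φ u : ι) = w.1 then s(h.choose.1, w) else s(w, w)

theorem isOneSelection_absorbingSelection :
    IsOneSelection (completeMultipartiteGraph V) (absorbingSelection φ) := by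
  intro w
  unfold absorbingSelection
  split <;> simp

theorem absorbingSelection_eq {u : {v : (i : ι) × V i // v.1 ∈ s}} {w : (i : ι) × V i}
    (h : (φ u : ι) = w.1) : absorbingSelection φ w = s(u.1, w) := by
  have hex : ∃ u, (φ u : ι) = w.1 := ⟨u, h⟩
  have hchoose : hex.choose = u := φ.injective (Subtype.ext (hex.choose_spec.trans h.symm))
  rw [absorbingSelection, dif_pos hex, hchoose]

open Classical in
noncomputable def absorbingColoring (v : (i : ι) × V i) : ↥sᶜ :=
  if h : v.1 ∈ s then φ ⟨v, h⟩ else ⟨v.1, h⟩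

theorem absorbingColoring_ne_of_adj {u v : (i : ι) × V i}
    (huv : (oneRemoved (completeMultipartiteGraph V) (absorbingSelection φ)).Adj u v) :
    absorbingColoring φ u ≠ absorbingColoring φ v := by
  rw [oneRemoved, deleteEdges_adj] at huv
  obtain ⟨hclass, hkept⟩ := huv
  have hne : u ≠ v := fun h => hclass (congrArg Sigma.fst h)
  intro hcol
  unfold absorbingColoring at hcol
  by_cases hu : u.1 ∈ s <;> by_cases hv : v.1 ∈ s <;>
    simp only [hu, hv, dif_pos, dif_neg, not_false_eq_true] at hcol
  · exact hne (congrArg Subtype.val (φ.injective hcol))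
  · exact hkept ⟨v, absorbingSelection_eq φ (congrArg Subtype.val hcol)⟩
  · exact hkept ⟨u, (absorbingSelection_eq φ (congrArg Subtype.val hcol.symm)).trans
      Sym2.eq_swap⟩
  · exact hclass (congrArg Subtype.val hcol)

end CompleteMultipartite

open CompleteMultipartite in
theorem robustChromNum_completeMultipartiteGraph_le {ι : Type*} {V : ι → Type*} {s : Set ι}
    [Finite ↥sᶜ] (φ : {v : (i : ι) × V i // v.1 ∈ s} ↪ ↥sᶜ) :
    robustChromNum (completeMultipartiteGraph V) ≤ Nat.card ↥sᶜ := by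
  have := Fintype.ofFinite ↥sᶜ
  rw [Nat.card_eq_fintype_card]
  exact robustChromNum_le_of_colorable (isOneSelection_absorbingSelection φ)
    (Coloring.colorable ⟨absorbingColoring φ, absorbingColoring_ne_of_adj φ⟩)

theorem finSigmaFinEquiv_lt_sum_range {t : ℕ} {n : ℕ → ℕ} {j : ℕ}
    (v : (i : Fin t) × Fin (n i)) (hv : (v.1 : ℕ) < j) :
    (finSigmaFinEquiv v : ℕ) < ∑ i ∈ Finset.range j, n i := by
  obtain ⟨⟨i, hi⟩, x⟩ := v
  rw [finSigmaFinEquiv_apply]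
  simp only at hv ⊢
  calc ∑ k : Fin i, n (Fin.castLE hi.le k) + x < ∑ k ∈ Finset.range i, n k + n i := by
        simp only [Fin.val_castLE, Fin.sum_univ_eq_sum_range n i]
        exact Nat.add_lt_add_left x.2 _
    _ = ∑ k ∈ Finset.range (i + 1), n k := (Finset.sum_range_succ n i).symm
    _ ≤ ∑ k ∈ Finset.range j, n k := Finset.sum_le_sum_of_subset (by simpa using hv)

theorem robustChromNum_completeMultipartite_upper_bound_general
    (t : ℕ) (n : ℕ → ℕ) (j : ℕ)
    (hj : ∑ i ∈ Finset.range j, n i ≤ t - j) :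
    robustChromNum (completeMultipartiteGraph (fun i : Fin t => Fin (n i))) ≤ t - j := by
  let s : Set (Fin t) := {i | (i : ℕ) < j}
  have hcard : Nat.card ↥sᶜ = t - j := by
    rw [Nat.card_eq_card_toFinset, Set.toFinset_compl, Finset.card_compl, Set.toFinset_ofPred,
      Fin.card_filter_val_lt, Fintype.card_fin]
    omega
  let φ : {v : (i : Fin t) × Fin (n i) // v.1 ∈ s} ↪ ↥sᶜ :=
    { toFun := fun v => ⟨⟨j + finSigmaFinEquiv v.1, by
          have := finSigmaFinEquiv_lt_sum_range v.1 v.2; omega⟩, by simp [s]⟩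
      inj' := fun u v huv => by
        have hpos : j + (finSigmaFinEquiv u.1 : ℕ) = j + finSigmaFinEquiv v.1 := congrArg (·.1.1) huv
        exact Subtype.ext (finSigmaFinEquiv.injective (Fin.ext (by omega))) }
  exact hcard ▸ robustChromNum_completeMultipartiteGraph_le φ

/-- If `1 ≤ n 0 ≤ … ≤ n (t-1)` with `t ≥ 1`, `n 0 < t`, and `j` is the
largest integer with `n 0 + … + n (j-1) ≤ t - j`, then `χ₁(K_{n_1,…,n_t}) ≤ t - j`. -/
theorem robustChromNum_completeMultipartite_upper_bound
    (t : ℕ) (n : ℕ → ℕ) (j : ℕ) (ht : 1 ≤ t)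
    (hpos : ∀ i, i < t → 1 ≤ n i)
    (hmono : ∀ i i', i ≤ i' → i' < t → n i ≤ n i')
    (hsmall : n 0 < t)
    (hj : ∑ i ∈ Finset.range j, n i ≤ t - j)
    (hjmax : ∀ j', j < j' → ¬ (∑ i ∈ Finset.range j', n i ≤ t - j')) :
    robustChromNum (completeMultipartiteGraph (fun i : Fin t => Fin (n i))) ≤ t - j :=
  robustChromNum_completeMultipartite_upper_bound_general t n j hj
end
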